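/- arXiv:1808.01750 — 3 statements merged into one kernel-verified Lean document; each statement's English description precedes it below -/
import Mathlib

section
/- Let P_X be a Borel probability measure on ℝ having at least one atom, and let Q_Y be a continuous (atomless) Borel probability measure on ℝ. Then the optimal KS approximation error for simulating Q_Y from P_X satisfies inf over measurable f : ℝ → ℝ of |f_*P_X − Q_Y|_KS = (1/2)·max_x P_X({x}). -/
open MeasureTheory Set

noncomputable def cdfR (μ : Measure ℝ) (x : ℝ) : ℝ := (μ (Set.Iic x)).toReal

noncomputable def KSdist (μ ν : Measure ℝ) : ℝ := ⨆ x : ℝ, |cdfR μ x - cdfR ν x|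

/-!
Lower bound: a measurable `f` sends an atom of `P` of mass `m` to an atom of `f_*P` of mass at
least `m`. There the CDF of `f_*P` jumps by at least `m` while the CDF of the atomless `Q` is
continuous, so the difference of the two CDFs is at least `m/2` in absolute value on one side
of the jump.

Upper bound: let `M` be the largest atom mass of `P`. The midpoint CDF
`h x = (P (-∞, x] + P (-∞, x)) / 2` is within `M/2` of both ends of the jump of the CDF of `P` at
every `x`, and this forces `P {h ≤ t}` to lie within `M/2` of `t` for all `t ∈ [0, 1]`. Composing
`h` with the quantile function of `Q` thus simulates `Q` with KS error `M/2`, up to an arbitrarily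
small affine squeeze of `h` into `(0, 1)` that keeps the quantile finite.
-/

open Filter Function ProbabilityTheory

section InnerRegular

/- By inner regularity it suffices to bound the mass of a compact `K ⊆ A`, and `K` lies below
its greatest (resp. above its least) point, which is in `A`. -/

variable {α : Type*} [LinearOrder α] [TopologicalSpace α] [MeasurableSpace α]
  {μ : Measure α} [IsFiniteMeasure μ] [μ.InnerRegularCompactLTTop] {A : Set α} {c : ℝ}

theorem measureReal_le_of_forall_measureReal_Iic_le [ClosedIciTopology α] (hA : MeasurableSet A)
    (hc : 0 ≤ c) (h : ∀ x ∈ A, μ.real (Iic x) ≤ c) : μ.real A ≤ c := by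
  by_contra! hlt
  obtain ⟨K, hKA, hK, hcK⟩ := hA.exists_lt_isCompact_of_ne_top (measure_ne_top μ A)
    ((ENNReal.ofReal_lt_iff_lt_toReal hc (measure_ne_top μ A)).2 hlt)
  obtain ⟨x, hxK, hx⟩ := hK.exists_isGreatest (nonempty_of_measure_ne_zero (ne_bot_of_gt hcK))
  have hKx : μ.real K ≤ μ.real (Iic x) := measureReal_mono fun y hy => hx hy
  have hcK' := (ENNReal.ofReal_lt_iff_lt_toReal hc (measure_ne_top μ K)).1 hcK
  linarith [h x (hKA hxK), measureReal_def μ K]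

theorem measureReal_le_of_forall_measureReal_Ici_le [ClosedIicTopology α] (hA : MeasurableSet A)
    (hc : 0 ≤ c) (h : ∀ x ∈ A, μ.real (Ici x) ≤ c) : μ.real A ≤ c := by
  by_contra! hlt
  obtain ⟨K, hKA, hK, hcK⟩ := hA.exists_lt_isCompact_of_ne_top (measure_ne_top μ A)
    ((ENNReal.ofReal_lt_iff_lt_toReal hc (measure_ne_top μ A)).2 hlt)
  obtain ⟨x, hxK, hx⟩ := hK.exists_isLeast (nonempty_of_measure_ne_zero (ne_bot_of_gt hcK))
  have hKx : μ.real K ≤ μ.real (Ici x) := measureReal_mono fun y hy => hx hy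
  have hcK' := (ENNReal.ofReal_lt_iff_lt_toReal hc (measure_ne_top μ K)).1 hcK
  linarith [h x (hKA hxK), measureReal_def μ K]

end InnerRegular

section ApproximateUniform

variable {P : Measure ℝ} [IsProbabilityMeasure P]

theorem abs_measureReal_setOf_le_sub_le {g : ℝ → ℝ} (hg : Measurable g) {c : ℝ}
    (hIic : ∀ x, P.real (Iic x) - c ≤ g x) (hIio : ∀ x, g x ≤ P.real (Iio x) + c)
    {t : ℝ} (ht0 : 0 ≤ t) (ht1 : t ≤ 1) : |P.real {x | g x ≤ t} - t| ≤ c := by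
  have hc : 0 ≤ c := by
    linarith [hIic 0, hIio 0, measureReal_mono (μ := P) (Iio_subset_Iic_self (a := (0 : ℝ)))]
  have hA : MeasurableSet {x | g x ≤ t} := measurableSet_le hg measurable_const
  have upper : P.real {x | g x ≤ t} ≤ t + c :=
    measureReal_le_of_forall_measureReal_Iic_le hA (by linarith) fun x hx => by
      linarith [hIic x, show g x ≤ t from hx]
  have upper_compl : P.real {x | g x ≤ t}ᶜ ≤ 1 - t + c :=
    measureReal_le_of_forall_measureReal_Ici_le hA.compl (by linarith) fun x hx => by
      rw [← compl_Iio, probReal_compl_eq_one_sub measurableSet_Iio]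
      linarith [hIio x, not_le.1 (show ¬g x ≤ t from hx)]
  rw [probReal_compl_eq_one_sub hA] at upper_compl
  rw [abs_le]
  constructor <;> linarith

end ApproximateUniform

noncomputable def midCdf (P : Measure ℝ) (x : ℝ) : ℝ := (P.real (Iic x) + P.real (Iio x)) / 2

section MidCdf

variable (P : Measure ℝ)

theorem monotone_midCdf [IsFiniteMeasure P] : Monotone (midCdf P) := fun x y hxy => by
  have hIic : P.real (Iic x) ≤ P.real (Iic y) := measureReal_mono (Iic_subset_Iic.2 hxy)
  have hIio : P.real (Iio x) ≤ P.real (Iio y) := measureReal_mono (Iio_subset_Iio hxy)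
  unfold midCdf
  linarith

theorem midCdf_eq_measureReal_Iio_add [IsFiniteMeasure P] (x : ℝ) :
    midCdf P x = P.real (Iio x) + P.real {x} / 2 := by
  rw [midCdf, ← Iio_union_right, measureReal_union (by simp) (measurableSet_singleton x)]
  ring

theorem midCdf_eq_measureReal_Iic_sub [IsFiniteMeasure P] (x : ℝ) :
    midCdf P x = P.real (Iic x) - P.real {x} / 2 := by
  rw [midCdf_eq_measureReal_Iio_add, ← Iio_union_right,
    measureReal_union (by simp) (measurableSet_singleton x)]
  ring

theorem midCdf_nonneg (x : ℝ) : 0 ≤ midCdf P x := by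
  unfold midCdf
  linarith [measureReal_nonneg (μ := P) (s := Iic x), measureReal_nonneg (μ := P) (s := Iio x)]

theorem midCdf_le_one [IsZeroOrProbabilityMeasure P] (x : ℝ) : midCdf P x ≤ 1 := by
  unfold midCdf
  linarith [measureReal_le_one (μ := P) (s := Iic x), measureReal_le_one (μ := P) (s := Iio x)]

end MidCdf

/-- Meaningful only for `u ∈ (0, 1)`: otherwise the set is unbounded below or empty. -/
noncomputable def quantile (μ : Measure ℝ) (u : ℝ) : ℝ := sInf {y | u ≤ cdf μ y}

theorem quantile_le_iff (μ : Measure ℝ) [IsProbabilityMeasure μ] {u y : ℝ} (hu0 : 0 < u)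
    (hu1 : u < 1) : quantile μ u ≤ y ↔ u ≤ cdf μ y := by
  have hne : {y | u ≤ cdf μ y}.Nonempty :=
    ((tendsto_cdf_atTop μ).eventually (eventually_ge_nhds hu1)).exists
  have hbdd : BddBelow {y | u ≤ cdf μ y} := by
    obtain ⟨b, hb⟩ := eventually_atBot.1 ((tendsto_cdf_atBot μ).eventually (eventually_lt_nhds hu0))
    exact ⟨b, fun z hz => le_of_not_ge fun hzb => (hb z hzb).not_ge hz⟩
  refine ⟨fun h => ?_, fun h => csInf_le hbdd h⟩
  have hq : u ≤ cdf μ (quantile μ u) := by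
    refine ge_of_tendsto (((cdf μ).right_continuous _).mono Ioi_subset_Ici_self) ?_
    filter_upwards [self_mem_nhdsWithin] with z hz
    obtain ⟨w, hw, hwz⟩ := exists_lt_of_csInf_lt hne hz
    exact hw.trans (monotone_cdf μ hwz.le)
  exact hq.trans (monotone_cdf μ h)

section KSdist

theorem cdfR_eq_cdf (μ : Measure ℝ) [IsProbabilityMeasure μ] : cdfR μ = cdf μ :=
  funext fun x => (cdf_eq_real μ x).symm

variable (μ ν : Measure ℝ)

theorem KSdist_nonneg : 0 ≤ KSdist μ ν := Real.iSup_nonneg fun _ => abs_nonneg _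

variable {μ ν}

theorem KSdist_le {c : ℝ} (h : ∀ x, |cdfR μ x - cdfR ν x| ≤ c) : KSdist μ ν ≤ c := ciSup_le h

theorem abs_cdfR_sub_le_KSdist [IsFiniteMeasure μ] [IsFiniteMeasure ν] (x : ℝ) :
    |cdfR μ x - cdfR ν x| ≤ KSdist μ ν := by
  refine le_ciSup (f := fun x => |cdfR μ x - cdfR ν x|) ⟨μ.real univ + ν.real univ, ?_⟩ x
  rintro _ ⟨y, rfl⟩
  have hμ : μ.real (Iic y) ≤ μ.real univ := measureReal_mono (subset_univ _)
  have hν : ν.real (Iic y) ≤ ν.real univ := measureReal_mono (subset_univ _)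
  have hμ0 : 0 ≤ μ.real (Iic y) := measureReal_nonneg
  have hν0 : 0 ≤ ν.real (Iic y) := measureReal_nonneg
  simp only [cdfR, ← measureReal_def]
  rw [abs_le]
  constructor <;> linarith

theorem measureReal_singleton_le_two_mul_KSdist [IsProbabilityMeasure μ] [IsProbabilityMeasure ν]
    [NullSingletonClass ν] (y : ℝ) : μ.real {y} ≤ 2 * KSdist μ ν := by
  have jump_μ : μ.real {y} = cdf μ y - leftLim (cdf μ) y := by
    have h := (cdf μ).measure_singleton y
    rw [measure_cdf] at h
    rw [measureReal_def, h, ENNReal.toReal_ofReal (sub_nonneg.2 ((monotone_cdf μ).leftLim_le le_rfl))]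
  have jump_ν : leftLim (cdf ν) y = cdf ν y := by
    have h := (cdf ν).measure_singleton y
    rw [measure_cdf, measure_singleton, eq_comm, ENNReal.ofReal_eq_zero, sub_nonpos] at h
    exact le_antisymm ((monotone_cdf ν).leftLim_le le_rfl) h
  have hK : ∀ x, |cdf μ x - cdf ν x| ≤ KSdist μ ν := by
    simpa only [cdfR_eq_cdf] using abs_cdfR_sub_le_KSdist (μ := μ) (ν := ν)
  have hleft : |leftLim (cdf μ) y - cdf ν y| ≤ KSdist μ ν := by
    have h := ((monotone_cdf μ).tendsto_leftLim y).sub ((monotone_cdf ν).tendsto_leftLim y)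
    rw [jump_ν] at h
    exact le_of_tendsto h.abs (Eventually.of_forall hK)
  linarith [le_abs_self (cdf μ y - cdf ν y), neg_abs_le (leftLim (cdf μ) y - cdf ν y), hK y]

end KSdist

theorem exists_measurable_KSdist_map_le_of_bounds {P : Measure ℝ} (Q : Measure ℝ)
    [IsProbabilityMeasure P] [IsProbabilityMeasure Q] {g : ℝ → ℝ} (hg : Measurable g)
    (hg0 : ∀ x, 0 < g x) (hg1 : ∀ x, g x < 1) {c : ℝ}
    (hIic : ∀ x, P.real (Iic x) - c ≤ g x) (hIio : ∀ x, g x ≤ P.real (Iio x) + c) :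
    ∃ f : ℝ → ℝ, Measurable f ∧ KSdist (P.map f) Q ≤ c := by
  have hpre : ∀ y, (fun x => quantile Q (g x)) ⁻¹' Iic y = {x | g x ≤ cdf Q y} := fun y => by
    ext x
    exact quantile_le_iff Q (hg0 x) (hg1 x)
  have hf : Measurable fun x => quantile Q (g x) :=
    measurable_of_Iic fun y => hpre y ▸ measurableSet_le hg measurable_const
  refine ⟨_, hf, KSdist_le fun y => ?_⟩
  rw [cdfR, Measure.map_apply hf measurableSet_Iic, hpre, ← measureReal_def, cdfR_eq_cdf]
  exact abs_measureReal_setOf_le_sub_le hg hIic hIio (cdf_nonneg Q y) (cdf_le_one Q y)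

theorem exists_measurable_KSdist_map_le (P Q : Measure ℝ) [IsProbabilityMeasure P]
    [IsProbabilityMeasure Q] {τ : ℝ} (hτ0 : 0 < τ) (hτ1 : τ ≤ 1) :
    ∃ f : ℝ → ℝ, Measurable f ∧ KSdist (P.map f) Q ≤ ((⨆ x, P.real {x}) + τ) / 2 := by
  have hM : ∀ x, P.real {x} ≤ ⨆ x, P.real {x} :=
    le_ciSup ⟨1, by rintro _ ⟨y, rfl⟩; exact measureReal_le_one⟩
  have h1τ : 0 ≤ 1 - τ := by linarith
  refine exists_measurable_KSdist_map_le_of_bounds Q (g := fun x => τ / 2 + (1 - τ) * midCdf P x)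
    (((monotone_midCdf P).const_mul h1τ).const_add _).measurable (fun x => ?_) (fun x => ?_)
    (fun x => ?_) (fun x => ?_)
  · linarith [mul_nonneg h1τ (midCdf_nonneg P x)]
  · linarith [mul_le_mul_of_nonneg_left (midCdf_le_one P x) h1τ]
  · linarith [mul_le_mul_of_nonneg_left (midCdf_le_one P x) hτ0.le,
      midCdf_eq_measureReal_Iic_sub P x, hM x]
  · linarith [mul_nonneg hτ0.le (midCdf_nonneg P x), midCdf_eq_measureReal_Iio_add P x, hM x]

theorem optimal_ks_error_discontinuous_seed_general (P Q : Measure ℝ)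
    [IsProbabilityMeasure P] [IsProbabilityMeasure Q] [NullSingletonClass Q] :
    (⨅ f : {f : ℝ → ℝ // Measurable f}, KSdist (P.map f) Q)
      = (1 / 2) * ⨆ x : ℝ, (P {x}).toReal := by
  simp only [← measureReal_def]
  have hbdd : BddBelow (range fun f : {f : ℝ → ℝ // Measurable f} => KSdist (P.map f) Q) :=
    ⟨0, by rintro _ ⟨f, rfl⟩; exact KSdist_nonneg _ _⟩
  have : Nonempty {f : ℝ → ℝ // Measurable f} := ⟨⟨id, measurable_id⟩⟩
  refine le_antisymm (le_of_forall_pos_le_add fun ε hε => ?_) (le_ciInf fun f => ?_)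
  · obtain ⟨f, hf, hKS⟩ :=
      exists_measurable_KSdist_map_le P Q (lt_min hε one_pos) (min_le_right ε 1)
    linarith [ciInf_le hbdd ⟨f, hf⟩, min_le_left ε 1]
  · have : IsProbabilityMeasure (P.map f.1) := Measure.isProbabilityMeasure_map f.2.aemeasurable
    have hatom : ∀ x, P.real {x} ≤ 2 * KSdist (P.map f) Q := fun x =>
      calc P.real {x} ≤ (P.map f).real {f.1 x} := ENNReal.toReal_mono (measure_ne_top _ _)
            (by simpa using Measure.le_map_apply_image f.2.aemeasurable {x})
        _ ≤ 2 * KSdist (P.map f) Q := measureReal_singleton_le_two_mul_KSdist _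
    linarith [ciSup_le hatom]

/-- For a discontinuous seed `P` (having an atom) and an atomless target `Q`, the optimal
KS approximation error over all measurable simulators equals half the largest atom mass. -/
theorem optimal_ks_error_discontinuous_seed (P Q : Measure ℝ)
    [IsProbabilityMeasure P] [IsProbabilityMeasure Q] [NullSingletonClass Q]
    (hatom : ∃ x : ℝ, 0 < P {x}) :
    (⨅ f : {f : ℝ → ℝ // Measurable f}, KSdist (P.map f) Q)
      = (1 / 2) * ⨆ x : ℝ, (P {x}).toReal :=
  optimal_ks_error_discontinuous_seed_general P Q
end

section
/- Squeezing periodic functions decorrelation lemma: Let f ∈ L¹(ℝ), let g : [a,b] → ℝ be integrable with |g| essentially bounded, and for Δ > 0 define the periodized squeeze g_Δ(x) = g(a + ((b−a)/Δ)(x − iΔ)) for x ∈ (iΔ, (i+1)Δ]. Then lim_{Δ→0} ∫_ℝ f(x) g_Δ(x) dx = (1/(b−a)) (∫_ℝ f(x) dx)(∫_a^b g(t) dt). -/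
/-!
Put `h := squeeze g a b 1`, a `1`-periodic function with mean `m = (b - a)⁻¹ ∫_a^b g`, so that
the integral in question is `L_Δ f = ∫ f(y) h(y/Δ) dy = ∫ f(y + Δt) h(y/Δ + t) dy` for every `t`.
By Fubini and periodicity the shifted pairings `∫ f(y) h(y/Δ + t) dy` average over `t ∈ (0, 1]`
to exactly `m ∫ f`, and each differs from `L_Δ f` by at most `sup |h| · ‖f(Δt + ·) - f‖₁`.
This tends to `0` with `Δ` by continuity of translation in `L¹`. Since `g` only matters almost
everywhere on `[a, b]`, it may first be replaced by a measurable, everywhere bounded version.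
-/

open MeasureTheory Set Filter

/-- The `Δ`-periodic squeeze of `g : [a,b] → ℝ`: on each interval `(iΔ, (i+1)Δ]`
(where `i = ⌈x/Δ⌉ - 1`), `x ↦ g (a + ((b-a)/Δ)(x - iΔ))`. -/
noncomputable def squeeze (g : ℝ → ℝ) (a b Δ : ℝ) (x : ℝ) : ℝ :=
  g (a + ((b - a) / Δ) * (x - ((⌈x / Δ⌉ : ℝ) - 1) * Δ))

open Topology

theorem tendsto_integral_norm_comp_add_sub {G E : Type*} [AddGroup G] [TopologicalSpace G]
    [IsTopologicalAddGroup G] [MeasurableSpace G] [BorelSpace G] [NormedAddCommGroup E]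
    {μ : Measure G} [IsLocallyFiniteMeasure μ] [μ.InnerRegularCompactLTTop]
    [μ.IsAddLeftInvariant] {f : G → E} (hf : Integrable f μ) :
    Tendsto (fun c => ∫ x, ‖f (c + x) - f x‖ ∂μ) (𝓝 0) (𝓝 0) := by
  have : Fact ((1 : ENNReal) ≠ ⊤) := ⟨ENNReal.one_ne_top⟩
  set F : Lp E 1 μ := hf.toL1 f
  have hcont : Tendsto (fun c : G => DomAddAct.mk c +ᵥ F) (𝓝 0) (𝓝 F) := by
    have : Continuous (fun c : G => DomAddAct.mk c +ᵥ F) :=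
      DomAddAct.continuous_mk.vadd continuous_const
    simpa using this.tendsto 0
  have hdist : ∀ c : G, dist (DomAddAct.mk c +ᵥ F) F = ∫ x, ‖f (c + x) - f x‖ ∂μ := by
    intro c
    rw [dist_eq_norm, L1.norm_eq_integral_norm]
    refine integral_congr_ae ?_
    have hF : (F : G → E) =ᵐ[μ] f := hf.coeFn_toL1
    filter_upwards [Lp.coeFn_sub (DomAddAct.mk c +ᵥ F) F,
      DomAddAct.vadd_Lp_ae_eq (DomAddAct.mk c) F, hF,
      (measurePreserving_vadd c μ).quasiMeasurePreserving.ae hF] with x h1 h2 h3 h4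
    rw [h1, Pi.sub_apply, h2, h3]
    exact congrArg (‖· - f x‖) h4
  simpa only [hdist] using (tendsto_iff_dist_tendsto_zero).1 hcont

theorem integrable_mul_comp_of_bdd {α : Type*} [MeasurableSpace α] {μ : Measure α}
    {f φ : α → ℝ} {h : ℝ → ℝ} {C : ℝ} (hh : Measurable h) (hC : ∀ y, |h y| ≤ C)
    (hf : Integrable f μ) (hφ : Measurable φ) : Integrable (fun x => f x * h (φ x)) μ :=
  hf.mul_bdd (hh.comp hφ).aestronglyMeasurable (ae_of_all _ fun x => hC (φ x))

section Periodic

variable {f h : ℝ → ℝ} {C : ℝ}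

theorem integrable_prod_mul_comp_add (hh : Measurable h) (hC : ∀ y, |h y| ≤ C)
    (hf : Integrable f) {φ : ℝ → ℝ} (hφ : Measurable φ) (μ : Measure ℝ)
    [IsFiniteMeasure μ] :
    Integrable (Function.uncurry fun t y => f y * h (φ y + t)) (μ.prod volume) :=
  (hf.comp_snd μ).mul_bdd
    (hh.comp (by fun_prop : Measurable fun p : ℝ × ℝ => φ p.2 + p.1)).aestronglyMeasurable
    (ae_of_all _ fun p => hC (φ p.2 + p.1))

theorem setIntegral_Ioc_integral_mul_comp_add (hh : Measurable h) (hper : Function.Periodic h 1)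
    (hC : ∀ y, |h y| ≤ C) (hf : Integrable f) {φ : ℝ → ℝ} (hφ : Measurable φ) :
    ∫ t in Ioc 0 1, ∫ y, f y * h (φ y + t) = (∫ y, f y) * ∫ t in 0..1, h t := by
  have hmean : ∀ z, ∫ t in Ioc 0 1, h (z + t) = ∫ t in 0..1, h t := fun z => by
    rw [← intervalIntegral.integral_of_le zero_le_one, intervalIntegral.integral_comp_add_left,
      add_zero, hper.intervalIntegral_add_eq z 0, zero_add]
  rw [integral_integral_swap (integrable_prod_mul_comp_add hh hC hf hφ _), ← integral_mul_const]
  simp_rw [integral_const_mul, hmean]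

theorem abs_integral_mul_comp_div_sub_shift_le (hh : Measurable h) (hC : ∀ y, |h y| ≤ C)
    (hf : Integrable f) {Δ : ℝ} (hΔ : Δ ≠ 0) (t : ℝ) :
    |(∫ x, f x * h (x / Δ)) - ∫ y, f y * h (y / Δ + t)| ≤
      C * ∫ y, |f (Δ * t + y) - f y| := by
  have htranslate : ∫ x, f x * h (x / Δ) = ∫ y, f (y + Δ * t) * h (y / Δ + t) := by
    rw [← integral_add_right_eq_self _ (Δ * t)]
    simp_rw [add_div, mul_div_cancel_left₀ _ hΔ]
  have hmeas : Measurable fun y : ℝ => y / Δ + t := by fun_prop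
  rw [htranslate, ← integral_sub (integrable_mul_comp_of_bdd hh hC (hf.comp_add_right _) hmeas)
    (integrable_mul_comp_of_bdd hh hC hf hmeas), ← integral_const_mul, ← Real.norm_eq_abs]
  refine norm_integral_le_of_norm_le (((hf.comp_add_left _).sub hf).abs.const_mul C)
    (ae_of_all _ fun y => ?_)
  rw [Real.norm_eq_abs, ← sub_mul, abs_mul, mul_comm, add_comm y]
  exact mul_le_mul_of_nonneg_right (hC _) (abs_nonneg _)

theorem abs_integral_mul_comp_div_sub_le (hh : Measurable h) (hper : Function.Periodic h 1)
    (hC : ∀ y, |h y| ≤ C) (hf : Integrable f) {Δ ε : ℝ} (hΔ : 0 < Δ)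
    (hshift : ∀ c ∈ Icc 0 Δ, ∫ x, |f (c + x) - f x| ≤ ε) :
    |(∫ x, f x * h (x / Δ)) - (∫ x, f x) * ∫ t in 0..1, h t| ≤ C * ε := by
  have hC0 : 0 ≤ C := (abs_nonneg _).trans (hC 0)
  have hshifted : ∀ t ∈ Ioc (0 : ℝ) 1,
      |(∫ x, f x * h (x / Δ)) - ∫ y, f y * h (y / Δ + t)| ≤ C * ε := fun t ht =>
    (abs_integral_mul_comp_div_sub_shift_le hh hC hf hΔ.ne' t).trans <|
      mul_le_mul_of_nonneg_left (hshift _ ⟨by nlinarith [ht.1], by nlinarith [ht.2]⟩) hC0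
  have hdiv : Measurable fun x : ℝ => x / Δ := by fun_prop
  have hT : Integrable (fun t => ∫ y, f y * h (y / Δ + t)) (volume.restrict (Ioc 0 1)) :=
    (integrable_prod_mul_comp_add hh hC hf hdiv _).integral_prod_left
  calc |(∫ x, f x * h (x / Δ)) - (∫ x, f x) * ∫ t in 0..1, h t|
      = ‖∫ t in Ioc 0 1, ((∫ x, f x * h (x / Δ)) - ∫ y, f y * h (y / Δ + t))‖ := by
        rw [integral_sub (integrable_const _) hT, setIntegral_const,
          Real.volume_real_Ioc_of_le zero_le_one,
          ← setIntegral_Ioc_integral_mul_comp_add hh hper hC hf hdiv]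
        simp
    _ ≤ C * ε * volume.real (Ioc (0 : ℝ) 1) :=
        norm_setIntegral_le_of_norm_le_const measure_Ioc_lt_top hshifted
    _ = C * ε := by simp

theorem tendsto_integral_mul_comp_div (hh : Measurable h) (hper : Function.Periodic h 1)
    (hC : ∀ y, |h y| ≤ C) (hf : Integrable f) :
    Tendsto (fun Δ => ∫ x, f x * h (x / Δ)) (𝓝[>] 0)
      (𝓝 ((∫ x, f x) * ∫ t in 0..1, h t)) := by
  have hC0 : 0 ≤ C := (abs_nonneg _).trans (hC 0)
  rw [Metric.tendsto_nhds]
  intro ε hε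
  have hε' : 0 < ε / (C + 1) := by positivity
  obtain ⟨δ, hδ, hshift⟩ := Metric.eventually_nhds_iff.1
    (Metric.tendsto_nhds.1 (tendsto_integral_norm_comp_add_sub hf) _ hε')
  filter_upwards [Ioo_mem_nhdsGT hδ] with Δ hΔ
  refine (abs_integral_mul_comp_div_sub_le hh hper hC hf hΔ.1 (ε := ε / (C + 1))
    fun c hc => ?_).trans_lt ?_
  · have hc' : dist c 0 < δ := by
      rw [Real.dist_0_eq_abs, abs_of_nonneg hc.1]
      linarith [hc.2, hΔ.2]
    simpa [Real.dist_eq, abs_of_nonneg (integral_nonneg fun _ => abs_nonneg _)]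
      using (hshift hc').le
  · rw [mul_div_assoc', div_lt_iff₀ (by positivity)]
    nlinarith

end Periodic

theorem MeasureTheory.AEStronglyMeasurable.exists_measurable_abs_le_ae_eq {α : Type*}
    [MeasurableSpace α] {μ : Measure α} {g : α → ℝ} (hg : AEStronglyMeasurable g μ)
    {C : ℝ} (hC0 : 0 ≤ C) (hC : ∀ᵐ x ∂μ, |g x| ≤ C) :
    ∃ g' : α → ℝ, Measurable g' ∧ (∀ x, |g' x| ≤ C) ∧ g =ᵐ[μ] g' := by
  refine ⟨fun x => max (-C) (min C (hg.mk g x)), ?_, fun x => ?_, ?_⟩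
  · have := hg.stronglyMeasurable_mk.measurable
    fun_prop
  · exact abs_le.2 ⟨le_max_left _ _, max_le (by linarith) (min_le_left _ _)⟩
  · filter_upwards [hg.ae_eq_mk, hC] with x hx hxC
    rw [← hx, min_eq_right (abs_le.1 hxC).2, max_eq_right (abs_le.1 hxC).1]

theorem Function.Periodic.ae_eq_of_ae_eq_restrict_Ioc {α : Type*} {u v : ℝ → α} {T : ℝ}
    (hT : 0 < T) (hu : Function.Periodic u T) (hv : Function.Periodic v T) (t : ℝ)
    (huv : u =ᵐ[volume.restrict (Ioc t (t + T))] v) : u =ᵐ[volume] v := by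
  refine (isAddFundamentalDomain_Ioc hT t).measure_zero_of_invariant _ (fun g => ?_) ?_
  · obtain ⟨n, hn⟩ := AddSubgroup.mem_zmultiples_iff.1 g.2
    ext x
    simp [Set.mem_vadd_set_iff_neg_vadd_mem, AddSubgroup.vadd_def, ← hn, neg_add_eq_sub,
      hu.sub_int_mul_eq, hv.sub_int_mul_eq]
  · rw [EventuallyEq, ae_iff, Measure.restrict_apply' measurableSet_Ioc] at huv
    exact huv

section Squeeze

variable {g g' : ℝ → ℝ} {a b Δ : ℝ}

theorem measurable_squeeze (hg : Measurable g) (a b Δ : ℝ) : Measurable (squeeze g a b Δ) := by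
  unfold squeeze
  fun_prop

theorem squeeze_periodic (g : ℝ → ℝ) (a b Δ : ℝ) :
    Function.Periodic (squeeze g a b Δ) Δ := by
  intro x
  rcases eq_or_ne Δ 0 with rfl | hΔ
  · simp
  simp only [squeeze, add_div, div_self hΔ, Int.ceil_add_one]
  push_cast
  congr 1
  ring

theorem squeeze_eq_squeeze_one_div (g : ℝ → ℝ) (a b : ℝ) (hΔ : Δ ≠ 0) (x : ℝ) :
    squeeze g a b Δ x = squeeze g a b 1 (x / Δ) := by
  simp only [squeeze, div_one, mul_one]
  congr 2
  field_simp

theorem squeeze_of_mem_Ioc {x : ℝ} (hx : x ∈ Ioc 0 Δ) :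
    squeeze g a b Δ x = g (a + (b - a) / Δ * x) := by
  have hΔ : 0 < Δ := hx.1.trans_le hx.2
  have hceil : ⌈x / Δ⌉ = 1 := Int.ceil_eq_iff.2
    ⟨by simpa using div_pos hx.1 hΔ, by simpa using (div_le_one hΔ).2 hx.2⟩
  simp [squeeze, hceil]

theorem integral_squeeze (hab : a ≠ b) (hΔ : 0 < Δ) :
    ∫ x in 0..Δ, squeeze g a b Δ x = Δ / (b - a) * ∫ t in a..b, g t := by
  have hc : (b - a) / Δ ≠ 0 := div_ne_zero (sub_ne_zero.2 hab.symm) hΔ.ne'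
  rw [intervalIntegral.integral_of_le hΔ.le, setIntegral_congr_fun measurableSet_Ioc
    fun x hx => squeeze_of_mem_Ioc hx, ← intervalIntegral.integral_of_le hΔ.le,
    intervalIntegral.integral_comp_add_mul _ hc]
  simp [div_mul_cancel₀ _ hΔ.ne']

theorem squeeze_ae_eq (hab : a < b) (hΔ : 0 < Δ) (hgg' : g =ᵐ[volume.restrict (Icc a b)] g') :
    squeeze g a b Δ =ᵐ[volume] squeeze g' a b Δ := by
  refine (squeeze_periodic g a b Δ).ae_eq_of_ae_eq_restrict_Ioc hΔ
    (squeeze_periodic g' a b Δ) 0 ?_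
  have hc : (b - a) / Δ ≠ 0 := div_ne_zero (sub_ne_zero.2 hab.ne') hΔ.ne'
  rw [zero_add, EventuallyEq, ae_restrict_iff' measurableSet_Ioc]
  have hpull : ∀ᵐ x, a + (b - a) / Δ * x ∈ Icc a b →
      g (a + (b - a) / Δ * x) = g' (a + (b - a) / Δ * x) := by
    have := (measurePreserving_add_left volume a).quasiMeasurePreserving.ae
      ((ae_restrict_iff' measurableSet_Icc).1 hgg')
    simpa using (Measure.quasiMeasurePreserving_smul volume hc).ae this
  filter_upwards [hpull] with x hx hxI
  rw [squeeze_of_mem_Ioc hxI, squeeze_of_mem_Ioc hxI]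
  have ht : 0 < x / Δ ∧ x / Δ ≤ 1 := ⟨div_pos hxI.1 hΔ, (div_le_one hΔ).2 hxI.2⟩
  refine hx ?_
  rw [div_mul_comm]
  constructor <;> nlinarith [ht.1, ht.2]

end Squeeze

/-- Squeezing decorrelation lemma: for integrable `f` and essentially bounded
integrable `g` on `[a,b]`,
`∫ f · g_Δ → (1/(b-a)) (∫ f) (∫_a^b g)` as `Δ → 0⁺`. -/
theorem squeeze_decorrelation (f g : ℝ → ℝ) (a b : ℝ) (hab : a < b)
    (hf : Integrable f) (hg : IntegrableOn g (Set.Icc a b))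
    (hgbdd : ∃ C : ℝ, ∀ᵐ x ∂(volume.restrict (Set.Icc a b)), |g x| ≤ C) :
    Tendsto (fun Δ : ℝ => ∫ x, f x * squeeze g a b Δ x) (nhdsWithin 0 (Set.Ioi 0))
      (nhds ((1 / (b - a)) * (∫ x, f x) * ∫ t in a..b, g t)) := by
  obtain ⟨C, hC⟩ := hgbdd
  obtain ⟨g', hg'meas, hg'C, hgg'⟩ := hg.1.exists_measurable_abs_le_ae_eq (le_max_right C 0)
    (hC.mono fun _ hx => hx.trans (le_max_left C 0))
  have hmean : ∫ t in 0..1, squeeze g' a b 1 t = 1 / (b - a) * ∫ t in a..b, g t := by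
    rw [integral_squeeze hab.ne one_pos]
    congr 1
    refine intervalIntegral.integral_congr_ae ?_
    filter_upwards [(ae_restrict_iff' measurableSet_Icc).1 hgg'] with t ht htab
    rw [uIoc_of_le hab.le] at htab
    exact (ht (Ioc_subset_Icc_self htab)).symm
  have hlim := tendsto_integral_mul_comp_div (measurable_squeeze hg'meas a b 1)
    (squeeze_periodic g' a b 1) (fun _ => hg'C _) hf
  rw [hmean, ← mul_assoc, mul_comm (∫ x, f x)] at hlim
  refine hlim.congr' ?_
  filter_upwards [self_mem_nhdsWithin] with Δ hΔ
  refine integral_congr_ae ?_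
  filter_upwards [squeeze_ae_eq hab hΔ hgg'] with x hx
  rw [hx, squeeze_eq_squeeze_one_div g' a b (ne_of_gt hΔ)]
end

section
/- Quantitative squeeze bound: with f ∈ L¹(ℝ), g : [a,b] → ℝ essentially bounded, g_Δ the Δ-periodic squeeze of g, L_Δ = ∫ f·g_Δ and L = (1/(b−a))(∫f)(∫_a^b g), one has |L_Δ − L| ≤ (ess sup_x |g(x)|) · Σ_{i∈ℤ} ∫_{iΔ}^{(i+1)Δ} |f(x) − (1/Δ)∫_{iΔ}^{(i+1)Δ} f| dx. -/
open MeasureTheory Set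

/-!
On the cell `(iΔ, (i+1)Δ]` the squeeze is `g` composed with an increasing affine bijection onto
`(a, b]`, so its integral over every cell is `Δ/(b-a) ∫_a^b g`. Hence, with `mᵢ` the average of `f`
on the cell, the contribution of the cell to `L_Δ - L` is `∫ (f - mᵢ) g_Δ`, which is at most
`C ∫ |f - mᵢ|`; summing over the cells gives the bound. The affine description also shows that
null sets of `[a, b]` pull back to null sets, which transfers measurability and the bound `C` to
`g_Δ`.
-/
section Averages

variable {α : Type*} [MeasurableSpace α] {μ : Measure α} [IsFiniteMeasure μ] {f : α → ℝ}

theorem abs_integral_mul_sub_const_mul_integral_le {h : α → ℝ} {C : ℝ} (hf : Integrable f μ)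
    (hh : AEStronglyMeasurable h μ) (hC : ∀ᵐ x ∂μ, |h x| ≤ C) (c : ℝ) :
    |(∫ x, f x * h x ∂μ) - c * ∫ x, h x ∂μ| ≤ C * ∫ x, |f x - c| ∂μ := by
  have hsplit : (∫ x, f x * h x ∂μ) - c * ∫ x, h x ∂μ = ∫ x, (f x - c) * h x ∂μ := by
    rw [← integral_const_mul,
      ← integral_sub (hf.mul_bdd hh hC) ((Integrable.of_bound hh C hC).const_mul c)]
    simp_rw [sub_mul]
  rw [hsplit, ← Real.norm_eq_abs, ← integral_const_mul]
  refine norm_integral_le_of_norm_le ((hf.sub (integrable_const c)).abs.const_mul C) ?_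
  filter_upwards [hC] with x hx
  rw [norm_mul, Real.norm_eq_abs, Real.norm_eq_abs, mul_comm C]
  exact mul_le_mul_of_nonneg_left hx (abs_nonneg _)

theorem integral_abs_sub_average_le (hf : Integrable f μ) :
    ∫ x, |f x - ⨍ y, f y ∂μ| ∂μ ≤ 2 * ∫ x, |f x| ∂μ := by
  set m := ⨍ y, f y ∂μ
  have hm : μ.real univ * |m| ≤ ∫ x, |f x| ∂μ := by
    rw [← abs_of_nonneg measureReal_nonneg, ← abs_mul, ← smul_eq_mul, measure_smul_average]
    exact abs_integral_le_integral_abs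
  calc ∫ x, |f x - m| ∂μ ≤ ∫ x, (|f x| + |m|) ∂μ :=
        integral_mono (hf.sub (integrable_const m)).abs (hf.abs.add (integrable_const _))
          fun x => abs_sub _ _
    _ = (∫ x, |f x| ∂μ) + μ.real univ * |m| := by
        rw [integral_add hf.abs (integrable_const _), integral_const, smul_eq_mul]
    _ ≤ 2 * ∫ x, |f x| ∂μ := by linarith

end Averages

section Cells

variable {Δ : ℝ}

theorem Ioc_zsmul_eq_Ioc_intCast_mul (i : ℤ) :
    Ioc (i • Δ) ((i + 1) • Δ) = Ioc ((i : ℝ) * Δ) (((i : ℝ) + 1) * Δ) := by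
  simp only [zsmul_eq_mul, Int.cast_add, Int.cast_one]

theorem iUnion_Ioc_intCast_mul (hΔ : 0 < Δ) :
    ⋃ i : ℤ, Ioc ((i : ℝ) * Δ) (((i : ℝ) + 1) * Δ) = univ := by
  simpa only [Ioc_zsmul_eq_Ioc_intCast_mul] using iUnion_Ioc_zsmul hΔ

theorem pairwise_disjoint_Ioc_intCast_mul :
    Pairwise (Function.onFun Disjoint fun i : ℤ => Ioc ((i : ℝ) * Δ) (((i : ℝ) + 1) * Δ)) := by
  simpa only [Ioc_zsmul_eq_Ioc_intCast_mul] using pairwise_disjoint_Ioc_zsmul Δ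

theorem MeasureTheory.Integrable.hasSum_setIntegral_Ioc_intCast_mul {E : Type*}
    [NormedAddCommGroup E] [NormedSpace ℝ E] {μ : Measure ℝ} {F : ℝ → E} (hF : Integrable F μ)
    (hΔ : 0 < Δ) :
    HasSum (fun i : ℤ => ∫ x in Ioc ((i : ℝ) * Δ) (((i : ℝ) + 1) * Δ), F x ∂μ) (∫ x, F x ∂μ) := by
  simpa only [iUnion_Ioc_intCast_mul hΔ, Measure.restrict_univ] using
    hasSum_integral_iUnion (fun _ => measurableSet_Ioc)
      (pairwise_disjoint_Ioc_intCast_mul (Δ := Δ)) hF.integrableOn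

theorem MeasureTheory.Integrable.summable_setIntegral_abs_sub_setAverage_Ioc {f : ℝ → ℝ}
    (hf : Integrable f) (hΔ : 0 < Δ) :
    Summable fun i : ℤ => ∫ x in Ioc ((i : ℝ) * Δ) (((i : ℝ) + 1) * Δ),
      |f x - (1 / Δ) * ∫ t in Ioc ((i : ℝ) * Δ) (((i : ℝ) + 1) * Δ), f t| := by
  have havg : ∀ i : ℤ, (1 / Δ) * ∫ t in Ioc ((i : ℝ) * Δ) (((i : ℝ) + 1) * Δ), f t
      = ⨍ t in Ioc ((i : ℝ) * Δ) (((i : ℝ) + 1) * Δ), f t := by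
    intro i
    rw [setAverage_eq, Real.volume_real_Ioc, smul_eq_mul, one_div,
      show ((i : ℝ) + 1) * Δ - i * Δ = Δ by ring, max_eq_left hΔ.le]
  simp_rw [havg]
  refine Summable.of_nonneg_of_le (fun i => integral_nonneg fun x => abs_nonneg _)
    (fun i => integral_abs_sub_average_le hf.integrableOn)
    ((hf.abs.hasSum_setIntegral_Ioc_intCast_mul hΔ).summable.mul_left 2)

end Cells

section Squeeze

variable {a b Δ : ℝ}

noncomputable def squeezeMap (a b Δ x : ℝ) : ℝ :=
  a + ((b - a) / Δ) * (x - ((⌈x / Δ⌉ : ℝ) - 1) * Δ)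

theorem measurable_squeezeMap : Measurable (squeezeMap a b Δ) := by
  unfold squeezeMap
  fun_prop

theorem squeezeMap_eq_of_mem_Ioc (hΔ : 0 < Δ) {i : ℤ} {x : ℝ}
    (hx : x ∈ Ioc ((i : ℝ) * Δ) (((i : ℝ) + 1) * Δ)) :
    squeezeMap a b Δ x = (b - a) / Δ * x + (a - (b - a) * i) := by
  have hceil : ⌈x / Δ⌉ = i + 1 := by
    rw [Int.ceil_eq_iff, lt_div_iff₀ hΔ, div_le_iff₀ hΔ]
    push_cast
    exact ⟨by linarith [hx.1], by linarith [hx.2]⟩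
  rw [squeezeMap, hceil]
  push_cast
  field_simp
  ring

theorem squeezeMap_mem_Icc (hab : a ≤ b) (hΔ : 0 < Δ) {i : ℤ} {x : ℝ}
    (hx : x ∈ Ioc ((i : ℝ) * Δ) (((i : ℝ) + 1) * Δ)) :
    (b - a) / Δ * x + (a - (b - a) * i) ∈ Icc a b := by
  have ht : (b - a) / Δ * x + (a - (b - a) * i) = a + (b - a) * (x / Δ - i) := by ring
  have h0 : 0 ≤ x / Δ - i := by
    rw [sub_nonneg, le_div_iff₀ hΔ]; exact hx.1.le
  have h1 : x / Δ - i ≤ 1 := by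
    rw [sub_le_iff_le_add', div_le_iff₀ hΔ]; exact hx.2
  rw [ht]
  constructor <;> nlinarith

theorem volume_preimage_squeezeMap_eq_zero (hab : a < b) (hΔ : 0 < Δ) {E : Set ℝ}
    (hE : volume (E ∩ Icc a b) = 0) : volume (squeezeMap a b Δ ⁻¹' E) = 0 := by
  have hc : (b - a) / Δ ≠ 0 := (div_pos (sub_pos.2 hab) hΔ).ne'
  refine measure_mono_null (t := ⋃ i : ℤ,
      (fun x => (b - a) / Δ * x + (a - (b - a) * i)) ⁻¹' (E ∩ Icc a b)) ?_
    (measure_iUnion_null fun i => ?_)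
  · intro x hx
    obtain ⟨i, hi⟩ := mem_iUnion.1 ((iUnion_Ioc_intCast_mul hΔ).symm ▸ mem_univ x)
    rw [mem_preimage, squeezeMap_eq_of_mem_Ioc hΔ hi] at hx
    exact mem_iUnion.2 ⟨i, hx, squeezeMap_mem_Icc hab.le hΔ hi⟩
  · have := Real.volume_preimage_mul_left hc ((· + (a - (b - a) * i)) ⁻¹' (E ∩ Icc a b))
    rwa [measure_preimage_add_right, hE, mul_zero] at this

theorem quasiMeasurePreserving_squeezeMap (hab : a < b) (hΔ : 0 < Δ) :
    Measure.QuasiMeasurePreserving (squeezeMap a b Δ) volume (volume.restrict (Icc a b)) where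
  measurable := measurable_squeezeMap
  absolutelyContinuous := Measure.AbsolutelyContinuous.mk fun s hs hs0 => by
    rw [Measure.restrict_apply hs] at hs0
    rw [Measure.map_apply measurable_squeezeMap hs]
    exact volume_preimage_squeezeMap_eq_zero hab hΔ hs0

theorem setIntegral_squeeze_Ioc (g : ℝ → ℝ) (hab : a < b) (hΔ : 0 < Δ) (i : ℤ) :
    ∫ x in Ioc ((i : ℝ) * Δ) (((i : ℝ) + 1) * Δ), squeeze g a b Δ x
      = Δ / (b - a) * ∫ t in a..b, g t := by
  have hc : (b - a) / Δ ≠ 0 := (div_pos (sub_pos.2 hab) hΔ).ne'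
  have hle : (i : ℝ) * Δ ≤ ((i : ℝ) + 1) * Δ := by nlinarith
  have hsq : EqOn (squeeze g a b Δ) (fun x => g ((b - a) / Δ * x + (a - (b - a) * i)))
      (Ioc ((i : ℝ) * Δ) (((i : ℝ) + 1) * Δ)) :=
    fun x hx => congrArg g (squeezeMap_eq_of_mem_Ioc hΔ hx)
  rw [setIntegral_congr_fun measurableSet_Ioc hsq,
    ← intervalIntegral.integral_of_le hle, intervalIntegral.integral_comp_mul_add g hc,
    smul_eq_mul, inv_div]
  congr 2 <;> field_simp <;> ring

end Squeeze

theorem squeeze_quantitative_bound_general (f g : ℝ → ℝ) (a b Δ : ℝ) (hab : a < b) (hΔ : 0 < Δ)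
    (hf : Integrable f) (hg : IntegrableOn g (Set.Icc a b))
    (C : ℝ) (hC : ∀ᵐ x ∂(volume.restrict (Set.Icc a b)), |g x| ≤ C) :
    |(∫ x, f x * squeeze g a b Δ x) -
        (1 / (b - a)) * (∫ x, f x) * ∫ t in a..b, g t| ≤
      C * ∑' i : ℤ, ∫ x in Set.Ioc ((i : ℝ) * Δ) (((i : ℝ) + 1) * Δ),
        |f x - (1 / Δ) * ∫ t in Set.Ioc ((i : ℝ) * Δ) (((i : ℝ) + 1) * Δ), f t| := by
  have hφ := quasiMeasurePreserving_squeezeMap hab hΔ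
  have hsq_meas : AEStronglyMeasurable (squeeze g a b Δ) :=
    hg.aestronglyMeasurable.comp_quasiMeasurePreserving hφ
  have hsq_bdd : ∀ᵐ x, |squeeze g a b Δ x| ≤ C := hφ.ae hC
  have hsum := ((hf.mul_bdd hsq_meas hsq_bdd).hasSum_setIntegral_Ioc_intCast_mul hΔ).sub
    (((hf.hasSum_setIntegral_Ioc_intCast_mul hΔ).mul_left (1 / (b - a))).mul_right
      (∫ t in a..b, g t))
  rw [← hsum.tsum_eq, ← Real.norm_eq_abs]
  refine tsum_of_norm_bounded
    ((hf.summable_setIntegral_abs_sub_setAverage_Ioc hΔ).hasSum.mul_left C) fun i => ?_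
  have hcell := abs_integral_mul_sub_const_mul_integral_le
    (μ := volume.restrict (Ioc ((i : ℝ) * Δ) (((i : ℝ) + 1) * Δ))) hf.integrableOn
    hsq_meas.restrict (ae_restrict_of_ae hsq_bdd)
    ((1 / Δ) * ∫ t in Ioc ((i : ℝ) * Δ) (((i : ℝ) + 1) * Δ), f t)
  rw [setIntegral_squeeze_Ioc g hab hΔ i] at hcell
  rw [Real.norm_eq_abs]
  convert hcell using 3
  field_simp

/-- Quantitative squeeze bound:
`|L_Δ - L| ≤ (ess sup |g|) Σᵢ ∫_{iΔ}^{(i+1)Δ} |f - avg f|`. -/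
theorem squeeze_quantitative_bound (f g : ℝ → ℝ) (a b Δ : ℝ) (hab : a < b) (hΔ : 0 < Δ)
    (hf : Integrable f) (hg : IntegrableOn g (Set.Icc a b))
    (C : ℝ) (hC0 : 0 ≤ C) (hC : ∀ᵐ x ∂(volume.restrict (Set.Icc a b)), |g x| ≤ C) :
    |(∫ x, f x * squeeze g a b Δ x) -
        (1 / (b - a)) * (∫ x, f x) * ∫ t in a..b, g t| ≤
      C * ∑' i : ℤ, ∫ x in Set.Ioc ((i : ℝ) * Δ) (((i : ℝ) + 1) * Δ),
        |f x - (1 / Δ) * ∫ t in Set.Ioc ((i : ℝ) * Δ) (((i : ℝ) + 1) * Δ), f t| :=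
  squeeze_quantitative_bound_general f g a b Δ hab hΔ hf hg C hC
end
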